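/- arXiv:2206.03854 — 7 statements merged into one kernel-verified Lean document; each statement's English description precedes it below -/
import Mathlib

section
/- The second derivative of h₁(x) = (2/π)·arcsin((2σᵣ²x + 2σᵢ²)/(1 + 2σᵣ²x + 2σᵢ²)) equals −16σᵣ⁴(1 + 3σᵣ²x + 3σᵢ²) / (π(1 + 2σᵣ²x + 2σᵢ²)²(1 + 4σᵣ²x + 4σᵢ²)^{3/2}), which is strictly negative for all x ≥ 0 when σᵣ > 0; hence h₁ is strictly concave on [0,1]. -/
/-!
Write `h₁ x = (2/π) g(s)` with `g s = arcsin (s / (1 + s))` and `s = 2σᵣ²x + 2σᵢ²`, an affine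
function of `x`. Since `1 - (s/(1+s))² = (1+2s)/(1+s)²`, the chain rule gives
`g' s = 1 / ((1+s)√(1+2s))`, and differentiating once more,
`g'' s = -(2+3s) / ((1+s)²(1+2s)^{3/2})`, which is negative as soon as `1 + 2s > 0`.
The affine substitution multiplies `g''` by `(2σᵣ²)²`, and a negative second derivative
gives strict concavity.
-/

open Real Set Filter Topology

section AffineSubstitution

variable {𝕜 : Type*} [NontriviallyNormedField 𝕜]

theorem deriv_comp_mul_add (f : 𝕜 → 𝕜) (m k : 𝕜) :
    deriv (fun x => f (m * x + k)) = fun x => m * deriv f (m * x + k) := by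
  funext x
  simpa only [deriv_comp_add_const, smul_eq_mul] using
    deriv_comp_mul_left m (fun y => f (y + k)) x

theorem deriv_deriv_const_mul_comp_mul_add (f : 𝕜 → 𝕜) (c m k : 𝕜) :
    deriv (deriv fun x => c * f (m * x + k)) =
      fun x => c * m ^ 2 * deriv (deriv f) (m * x + k) := by
  simp only [deriv_const_mul_field', deriv_comp_mul_add]
  funext x
  ring

end AffineSubstitution

theorem hasDerivAt_arcsin_div_one_add {s : ℝ} (hs : 0 < 1 + 2 * s) :
    HasDerivAt (fun s => arcsin (s / (1 + s))) (1 / ((1 + s) * √(1 + 2 * s))) s := by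
  have h1s : 0 < 1 + s := by linarith
  have hquot : HasDerivAt (fun s => s / (1 + s)) (1 / (1 + s) ^ 2) s := by
    refine ((hasDerivAt_id s).div ((hasDerivAt_id s).const_add 1) h1s.ne').congr_deriv ?_
    simp only [id]
    field_simp
    ring
  have hsq : 1 - (s / (1 + s)) ^ 2 = (1 + 2 * s) / (1 + s) ^ 2 := by
    field_simp
    ring
  have hsq_pos : 0 < 1 - (s / (1 + s)) ^ 2 := by
    rw [hsq]
    positivity
  have hne_neg_one : s / (1 + s) ≠ -1 := by
    rintro h
    simp [h] at hsq_pos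
  have hne_one : s / (1 + s) ≠ 1 := by
    rintro h
    simp [h] at hsq_pos
  refine ((hasDerivAt_arcsin hne_neg_one hne_one).comp s hquot).congr_deriv ?_
  rw [hsq, sqrt_div hs.le, sqrt_sq h1s.le]
  have hr_pos : 0 < √(1 + 2 * s) := sqrt_pos.mpr hs
  field_simp

theorem hasDerivAt_one_div_one_add_mul_sqrt {s : ℝ} (hs : 0 < 1 + 2 * s) :
    HasDerivAt (fun s => 1 / ((1 + s) * √(1 + 2 * s)))
      (-(2 + 3 * s) / ((1 + s) ^ 2 * (1 + 2 * s) ^ ((3 : ℝ) / 2))) s := by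
  have h1s : 0 < 1 + s := by linarith
  have hr_pos : 0 < √(1 + 2 * s) := sqrt_pos.mpr hs
  have hr_sq : √(1 + 2 * s) ^ 2 = 1 + 2 * s := sq_sqrt hs.le
  have hsqrt : HasDerivAt (fun s => √(1 + 2 * s)) (1 / √(1 + 2 * s)) s := by
    refine ((((hasDerivAt_id s).const_mul 2).const_add 1).sqrt hs.ne').congr_deriv ?_
    simp only [id]
    field_simp
  have hden : HasDerivAt (fun s => (1 + s) * √(1 + 2 * s))
      (√(1 + 2 * s) + (1 + s) / √(1 + 2 * s)) s := by
    refine (((hasDerivAt_id s).const_add 1).mul hsqrt).congr_deriv ?_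
    simp only [id]
    ring
  have hpow : (1 + 2 * s) ^ ((3 : ℝ) / 2) = (1 + 2 * s) * √(1 + 2 * s) := by
    rw [show (3 : ℝ) / 2 = 1 + 1 / 2 by norm_num, rpow_add hs, rpow_one, ← sqrt_eq_rpow]
  refine ((hasDerivAt_const s 1).div hden (by positivity)).congr_deriv ?_
  rw [hpow]
  generalize √(1 + 2 * s) = r at hr_pos hr_sq ⊢
  obtain rfl : s = (r ^ 2 - 1) / 2 := by linarith
  field_simp
  ring

theorem deriv_deriv_arcsin_div_one_add {s : ℝ} (hs : 0 < 1 + 2 * s) :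
    deriv (deriv fun s => arcsin (s / (1 + s))) s =
      -(2 + 3 * s) / ((1 + s) ^ 2 * (1 + 2 * s) ^ ((3 : ℝ) / 2)) := by
  have hnhds : {t : ℝ | 0 < 1 + 2 * t} ∈ 𝓝 s :=
    (isOpen_lt continuous_const (by fun_prop)).mem_nhds hs
  have hderiv : deriv (fun s => arcsin (s / (1 + s))) =ᶠ[𝓝 s]
      fun s => 1 / ((1 + s) * √(1 + 2 * s)) :=
    eventually_of_mem hnhds fun t ht => (hasDerivAt_arcsin_div_one_add ht).deriv
  rw [hderiv.deriv_eq, (hasDerivAt_one_div_one_add_mul_sqrt hs).deriv]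

theorem deriv_deriv_arcsin_div_one_add_neg {s : ℝ} (hs : 0 < 1 + 2 * s) :
    deriv (deriv fun s => arcsin (s / (1 + s))) s < 0 := by
  rw [deriv_deriv_arcsin_div_one_add hs]
  have h1s : 0 < 1 + s := by linarith
  have hpow : 0 < (1 + 2 * s) ^ ((3 : ℝ) / 2) := rpow_pos_of_pos hs _
  exact div_neg_of_neg_of_pos (by linarith) (by positivity)

theorem stmt_1_general (σr σi : ℝ) (hr : 0 < σr)
    (h₁ : ℝ → ℝ)
    (hdef : ∀ x, h₁ x =
      2 / π * Real.arcsin ((2 * σr ^ 2 * x + 2 * σi ^ 2) / (1 + 2 * σr ^ 2 * x + 2 * σi ^ 2))) :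
    (∀ x : ℝ, 0 ≤ x →
      deriv (deriv h₁) x =
        -(16 * σr ^ 4 * (1 + 3 * σr ^ 2 * x + 3 * σi ^ 2)) /
          (π * (1 + 2 * σr ^ 2 * x + 2 * σi ^ 2) ^ 2 *
            (1 + 4 * σr ^ 2 * x + 4 * σi ^ 2) ^ ((3 : ℝ) / 2)) ∧
      deriv (deriv h₁) x < 0) ∧
    StrictConcaveOn ℝ (Set.Icc (0 : ℝ) 1) h₁ := by
  set g : ℝ → ℝ := fun s => arcsin (s / (1 + s))
  have hh : h₁ = fun x => 2 / π * g (2 * σr ^ 2 * x + 2 * σi ^ 2) := by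
    funext x
    simp only [hdef, g, add_assoc]
  have hpos : ∀ x, 0 ≤ x → 0 < 1 + 2 * (2 * σr ^ 2 * x + 2 * σi ^ 2) := fun x hx => by
    nlinarith [mul_nonneg (sq_nonneg σr) hx, sq_nonneg σi]
  have hd2 : ∀ x, deriv (deriv h₁) x =
      2 / π * (2 * σr ^ 2) ^ 2 * deriv (deriv g) (2 * σr ^ 2 * x + 2 * σi ^ 2) := by
    simp only [hh, deriv_deriv_const_mul_comp_mul_add, implies_true]
  have hd2_neg : ∀ x, 0 ≤ x → deriv (deriv h₁) x < 0 := fun x hx => by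
    rw [hd2]
    exact mul_neg_of_pos_of_neg (by positivity) (deriv_deriv_arcsin_div_one_add_neg (hpos x hx))
  refine ⟨fun x hx => ⟨?_, hd2_neg x hx⟩, strictConcaveOn_of_deriv2_neg (convex_Icc 0 1) ?_ ?_⟩
  · rw [hd2, deriv_deriv_arcsin_div_one_add (hpos x hx),
      show 1 + 2 * (2 * σr ^ 2 * x + 2 * σi ^ 2) = 1 + 4 * σr ^ 2 * x + 4 * σi ^ 2 by ring]
    field_simp
    ring
  · rw [hh]
    intro x hx
    have hg := (hasDerivAt_arcsin_div_one_add (hpos x hx.1)).continuousAt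
    exact (continuousAt_const.mul
      (hg.comp (f := fun x => 2 * σr ^ 2 * x + 2 * σi ^ 2) (by fun_prop))).continuousWithinAt
  · rw [interior_Icc]
    exact fun x hx => hd2_neg x hx.1.le

theorem stmt_1 (σr σi : ℝ) (hr : 0 < σr) (hi : 0 ≤ σi)
    (h₁ : ℝ → ℝ)
    (hdef : ∀ x, h₁ x =
      2 / π * Real.arcsin ((2 * σr ^ 2 * x + 2 * σi ^ 2) / (1 + 2 * σr ^ 2 * x + 2 * σi ^ 2))) :
    (∀ x : ℝ, 0 ≤ x →
      deriv (deriv h₁) x =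
        -(16 * σr ^ 4 * (1 + 3 * σr ^ 2 * x + 3 * σi ^ 2)) /
          (π * (1 + 2 * σr ^ 2 * x + 2 * σi ^ 2) ^ 2 *
            (1 + 4 * σr ^ 2 * x + 4 * σi ^ 2) ^ ((3 : ℝ) / 2)) ∧
      deriv (deriv h₁) x < 0) ∧
    StrictConcaveOn ℝ (Set.Icc (0 : ℝ) 1) h₁ :=
  stmt_1_general σr σi hr h₁ hdef
end

section
/- For σᵣ > 0 and σᵢ ≥ 0, the function h(x) = (2/π)·arcsin(1 − σᵣ²(1−x)/(σᵣ² + σᵢ²)) on [0,1] has x = 1 as a fixed point, and since h is strictly convex with h(0) > −1 and h has a vertical tangent at x = 1 (derivative tending to +∞), there exists a fixed point b ∈ [0,1) with b < 1. -/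
open Real Set

theorem stmt_9 (σr σi : ℝ) (hr : 0 < σr) (hi : 0 ≤ σi)
    (h : ℝ → ℝ)
    (hdef : ∀ x, h x =
      2 / π * Real.arcsin (1 - σr ^ 2 * (1 - x) / (σr ^ 2 + σi ^ 2))) :
    h 1 = 1 ∧ ∃ b ∈ Set.Ico (0 : ℝ) 1, h b = b := by
  have hπ := Real.pi_pos
  have hS : 0 < σr ^ 2 + σi ^ 2 := by positivity
  set t : ℝ := σr ^ 2 / (σr ^ 2 + σi ^ 2) with htdef
  have ht0 : 0 < t := by positivity
  have ht1 : t ≤ 1 := by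
    rw [htdef, div_le_one hS]; nlinarith [sq_nonneg σi]
  have h1 : h 1 = 1 := by
    rw [hdef]; simp [Real.arcsin_one]
  refine ⟨h1, ?_⟩
  have hrw : ∀ x, h x = 2 / π * Real.arcsin (1 - t * (1 - x)) := by
    intro x; rw [hdef, htdef]; ring_nf
  have hcont : Continuous h := by
    have : h = fun x => 2 / π * Real.arcsin (1 - t * (1 - x)) := funext hrw
    rw [this]
    exact continuous_const.mul (Real.continuous_arcsin.comp (by fun_prop))
  -- h 0 ≥ 0
  have hh0 : 0 ≤ h 0 := by
    rw [hrw]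
    have : 0 ≤ Real.arcsin (1 - t * (1 - 0)) := by
      rw [Real.arcsin_nonneg]; linarith
    positivity
  -- choose u
  set u : ℝ := min (1/2) (4 * t / π ^ 2) with hudef
  have hu0 : 0 < u := by
    apply lt_min (by norm_num); positivity
  have hu2 : u ≤ 1/2 := min_le_left _ _
  have hu3 : u ≤ 4 * t / π ^ 2 := min_le_right _ _
  have htu : t * u ≤ 1/2 := by nlinarith
  -- key inequality: h (1 - u) < 1 - u
  have key : h (1 - u) < 1 - u := by
    rw [hrw]
    have harg : 1 - t * (1 - (1 - u)) = 1 - t * u := by ring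
    rw [harg]
    have hlt : 1 - t * u < Real.sin (π / 2 * (1 - u)) := by
      have : π / 2 * (1 - u) = π / 2 - π * u / 2 := by ring
      rw [this, Real.sin_pi_div_two_sub]
      have hcos : 1 - (π * u / 2) ^ 2 / 2 < Real.cos (π * u / 2) :=
        Real.one_sub_sq_div_two_lt_cos (by positivity)
      have : (π * u / 2) ^ 2 / 2 < t * u := by
        have : π ^ 2 * u ≤ 4 * t := by
          rw [le_div_iff₀ (by positivity : (0:ℝ) < π ^ 2)] at hu3
          linarith
        nlinarith [Real.pi_pos, sq_nonneg u]
      linarith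
    have harc : Real.arcsin (1 - t * u) < π / 2 * (1 - u) := by
      rw [Real.arcsin_lt_iff_lt_sin ⟨by linarith, by linarith [mul_pos ht0 hu0]⟩
        ⟨by nlinarith, by nlinarith⟩]
      exact hlt
    calc 2 / π * Real.arcsin (1 - t * u) < 2 / π * (π / 2 * (1 - u)) := by
          apply mul_lt_mul_of_pos_left harc (by positivity)
      _ = 1 - u := by field_simp
  -- IVT on [0, 1-u] for g x = h x - x
  have hg : Continuous fun x => h x - x := by fun_prop
  have h01 : (0:ℝ) ≤ 1 - u := by linarith
  have := intermediate_value_Icc' h01 (hg.continuousOn)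
  have hmem : (0:ℝ) ∈ Set.Icc (h (1 - u) - (1 - u)) (h 0 - 0) := by
    constructor <;> simp <;> linarith
  obtain ⟨b, hb, hgb⟩ := this hmem
  simp only [] at hgb
  refine ⟨b, ⟨hb.1, by linarith [hb.2, hu0]⟩, by linarith [hgb]⟩
end

section
/- For σᵣ > 0 and σᵢ ≥ 0, the sequence defined by G₀ = 0 and G_{t+1} = (2/π)·arcsin(1 − σᵣ²(1−G_t)/(σᵣ² + σᵢ²)) converges to a limit b < 1. Consequently the stability metric L = 2(1 − b) satisfies L > 0: the sign-activation recurrent kernel is never stable for σᵣ > 0. -/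
open Real Set Filter

lemma arccos_lower {ε : ℝ} (h0 : 0 ≤ ε) (h1 : ε ≤ 1) :
    Real.sqrt (2 * ε) ≤ Real.arccos (1 - ε) := by
  set a := Real.arccos (1 - ε) with ha
  have han : 0 ≤ a := Real.arccos_nonneg _
  have hcos : Real.cos a = 1 - ε := Real.cos_arccos (by linarith) (by linarith)
  have hb : 1 - a ^ 2 / 2 ≤ Real.cos a := Real.one_sub_sq_div_two_le_cos
  have h2 : 2 * ε ≤ a ^ 2 := by nlinarith
  calc Real.sqrt (2 * ε) ≤ Real.sqrt (a ^ 2) := Real.sqrt_le_sqrt h2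
    _ = a := by rw [Real.sqrt_sq han]

lemma arcsin_upper {k : ℝ} (hk0 : 0 < k) (hk1 : k ≤ 1) :
    Real.arcsin (1 - 8 * k ^ 2 / π ^ 2) ≤ π / 2 - 4 * k / π := by
  have hπ : 0 < π := Real.pi_pos
  have hπ2 : (3 : ℝ) < π := Real.pi_gt_three
  have hε0 : 0 ≤ 8 * k ^ 2 / π ^ 2 := by positivity
  have hε1 : 8 * k ^ 2 / π ^ 2 ≤ 1 := by
    rw [div_le_one (by positivity)]; nlinarith
  have h1 := arccos_lower hε0 hε1
  have hs : Real.sqrt (2 * (8 * k ^ 2 / π ^ 2)) = 4 * k / π := by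
    have : 2 * (8 * k ^ 2 / π ^ 2) = (4 * k / π) ^ 2 := by
      field_simp; ring
    rw [this, Real.sqrt_sq (by positivity)]
  rw [hs] at h1
  rw [Real.arcsin_eq_pi_div_two_sub_arccos]
  linarith

theorem stmt_10 (σr σi : ℝ) (hr : 0 < σr) (hi : 0 ≤ σi)
    (G : ℕ → ℝ) (hG0 : G 0 = 0)
    (hGs : ∀ t, G (t + 1) =
      2 / π * Real.arcsin (1 - σr ^ 2 * (1 - G t) / (σr ^ 2 + σi ^ 2))) :
    ∃ b : ℝ, b < 1 ∧ Filter.Tendsto G Filter.atTop (nhds b) ∧ 0 < 2 * (1 - b) := by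
  have hπ : 0 < π := Real.pi_pos
  have hπ2 : (3 : ℝ) < π := Real.pi_gt_three
  have hsum : 0 < σr ^ 2 + σi ^ 2 := by positivity
  obtain ⟨k, hk⟩ : ∃ k : ℝ, k = σr ^ 2 / (σr ^ 2 + σi ^ 2) := ⟨_, rfl⟩
  have hk0 : 0 < k := by rw [hk]; positivity
  have hk1 : k ≤ 1 := by
    rw [hk, div_le_one hsum]; nlinarith
  have hGs' : ∀ t, G (t + 1) = 2 / π * Real.arcsin (1 - k * (1 - G t)) := by
    intro t; rw [hGs t, hk]; ring_nf
  obtain ⟨c, hc⟩ : ∃ c : ℝ, c = 1 - 8 * k / π ^ 2 := ⟨_, rfl⟩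
  have hdpos : 0 < 8 * k / π ^ 2 := by positivity
  have hd1 : 8 * k / π ^ 2 ≤ 1 := by
    rw [div_le_one (by positivity)]; nlinarith
  have hc1 : c < 1 := by rw [hc]; linarith
  have hc0 : 0 ≤ c := by rw [hc]; linarith
  -- invariant: 0 ≤ G t, G t ≤ c, G t ≤ G (t+1)
  have hinv : ∀ t, 0 ≤ G t ∧ G t ≤ c ∧ G t ≤ G (t + 1) := by
    intro t
    induction t with
    | zero =>
      refine ⟨by rw [hG0], by rw [hG0]; exact hc0, ?_⟩
      rw [hG0, hGs' 0, hG0]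
      have : (0:ℝ) ≤ Real.arcsin (1 - k * (1 - 0)) :=
        Real.arcsin_nonneg.mpr (by linarith)
      positivity
    | succ n ih =>
      obtain ⟨h0, hcle, hmono⟩ := ih
      have hnext0 : 0 ≤ G (n + 1) := le_trans h0 hmono
      have hnextc : G (n + 1) ≤ c := by
        rw [hGs' n]
        have harg : 1 - k * (1 - G n) ≤ 1 - 8 * k ^ 2 / π ^ 2 := by
          have h3 : 8 * k / π ^ 2 ≤ 1 - G n := by
            rw [hc] at hcle; linarith
          have h2 : 8 * k ^ 2 / π ^ 2 ≤ k * (1 - G n) := by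
            have := mul_le_mul_of_nonneg_left h3 hk0.le
            calc 8 * k ^ 2 / π ^ 2 = k * (8 * k / π ^ 2) := by ring
              _ ≤ k * (1 - G n) := this
          linarith
        have hle := le_trans (Real.monotone_arcsin harg) (arcsin_upper hk0 hk1)
        calc 2 / π * Real.arcsin (1 - k * (1 - G n)) ≤ 2 / π * (π / 2 - 4 * k / π) := by
              apply mul_le_mul_of_nonneg_left hle (by positivity)
          _ = 1 - 8 * k / π ^ 2 := by field_simp; ring
          _ = c := hc.symm
      refine ⟨hnext0, hnextc, ?_⟩
      rw [hGs' (n + 1)]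
      conv_lhs => rw [hGs' n]
      apply mul_le_mul_of_nonneg_left _ (by positivity)
      apply Real.monotone_arcsin
      nlinarith
  have hmonoG : Monotone G := monotone_nat_of_le_succ (fun n => (hinv n).2.2)
  have hbdd : BddAbove (Set.range G) := ⟨c, by rintro x ⟨t, rfl⟩; exact (hinv t).2.1⟩
  refine ⟨⨆ t, G t, ?_, tendsto_atTop_ciSup hmonoG hbdd, ?_⟩
  · exact lt_of_le_of_lt (ciSup_le fun t => (hinv t).2.1) hc1
  · have : (⨆ t, G t) < 1 := lt_of_le_of_lt (ciSup_le fun t => (hinv t).2.1) hc1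
    linarith
end

section
/- Let b(σᵢ) denote the smallest fixed point in [0,1) of h(x) = (2/π)·arcsin(1 − σᵣ²(1−x)/(σᵣ² + σᵢ²)) for fixed σᵣ > 0. Then as σᵢ → ∞, 1 − b(σᵢ) = 8σᵣ²/(π²σᵢ²) + O(σᵣ³/σᵢ³); in particular σᵢ²(1 − b(σᵢ)) → 8σᵣ²/π². -/
open Real Set Filter Topology

/-
Write u = 1 - b and c = σr² / (σr² + σi²). Since b ∈ [0, 1), the fixed point equation is
equivalent to 1 - c u = sin (π b / 2) = cos (π u / 2), i.e. c u = 2 sin² (π u / 4).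
Jordan's inequality then gives u ≤ 2 c → 0, and since sin x ~ x, c / u → π² / 8.
Finally σi² u = σr² (1 - c) (u / c) → 8 σr² / π².
-/

lemma mul_one_sub_eq_two_mul_sin_sq_of_fixedPoint {c x : ℝ} (hx : x ∈ Ico (0 : ℝ) 1)
    (h : 2 / π * arcsin (1 - c * (1 - x)) = x) :
    c * (1 - x) = 2 * sin (π * (1 - x) / 4) ^ 2 := by
  have harcsin : arcsin (1 - c * (1 - x)) = π * x / 2 :=
    calc arcsin (1 - c * (1 - x)) = π / 2 * (2 / π * arcsin (1 - c * (1 - x))) := by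
          field_simp
      _ = π * x / 2 := by rw [h]; ring
  rw [arcsin_eq_iff_eq_sin ⟨by nlinarith [pi_pos, hx.1], by nlinarith [pi_pos, hx.2]⟩,
    show π * x / 2 = π / 2 - 2 * (π * (1 - x) / 4) by ring, sin_pi_div_two_sub,
    cos_two_mul_eq_one_sub] at harcsin
  linarith

lemma le_two_mul_of_mul_eq_two_mul_sin_sq {c u : ℝ} (hu : 0 < u) (hu₂ : u ≤ 2)
    (h : c * u = 2 * sin (π * u / 4) ^ 2) : u ≤ 2 * c := by
  have hjordan : u / 2 ≤ sin (π * u / 4) :=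
    calc u / 2 = 2 / π * (π * u / 4) := by field_simp; ring
      _ ≤ sin (π * u / 4) := mul_le_sin (by positivity) (by nlinarith [pi_pos])
  nlinarith

lemma tendsto_div_of_mul_eq_two_mul_sin_sq {α : Type*} {l : Filter α} {c u : α → ℝ}
    (hu : Tendsto u l (𝓝 0)) (hne : ∀ᶠ a in l, u a ≠ 0)
    (h : ∀ᶠ a in l, c a * u a = 2 * sin (π * u a / 4) ^ 2) :
    Tendsto (fun a => u a / c a) l (𝓝 (8 / π ^ 2)) := by
  have hx : Tendsto (fun a => π * u a / 4) l (𝓝 0) := by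
    simpa using (hu.const_mul π).div_const 4
  have hsinc : Tendsto (fun a => π ^ 2 / 8 * sinc (π * u a / 4) ^ 2) l (𝓝 (π ^ 2 / 8)) := by
    simpa using (((continuous_sinc.tendsto 0).comp hx).pow 2).const_mul (π ^ 2 / 8)
  have hcu : Tendsto (fun a => c a / u a) l (𝓝 (π ^ 2 / 8)) := by
    refine hsinc.congr' ?_
    filter_upwards [hne, h] with a hua ha
    have hx₀ : π * u a / 4 ≠ 0 := by positivity
    rw [sinc_of_ne_zero hx₀, ← mul_div_cancel_right₀ (c a) hua, ha]
    field_simp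
    ring
  simpa using hcu.inv₀ (by positivity)

theorem stmt_11 (σr : ℝ) (hr : 0 < σr) (b : ℝ → ℝ)
    (hb : ∀ σi : ℝ, 0 < σi →
      b σi ∈ Set.Ico (0 : ℝ) 1 ∧
      2 / π * Real.arcsin (1 - σr ^ 2 * (1 - b σi) / (σr ^ 2 + σi ^ 2)) = b σi ∧
      ∀ x ∈ Set.Ico (0 : ℝ) 1,
        2 / π * Real.arcsin (1 - σr ^ 2 * (1 - x) / (σr ^ 2 + σi ^ 2)) = x → b σi ≤ x) :
    Filter.Tendsto (fun σi => σi ^ 2 * (1 - b σi)) Filter.atTop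
      (nhds (8 * σr ^ 2 / π ^ 2)) := by
  set c : ℝ → ℝ := fun σi => σr ^ 2 / (σr ^ 2 + σi ^ 2) with hc_def
  have hgap : ∀ᶠ σi in atTop, 0 < 1 - b σi ∧ 1 - b σi ≤ 1 ∧
      c σi * (1 - b σi) = 2 * sin (π * (1 - b σi) / 4) ^ 2 := by
    filter_upwards [eventually_gt_atTop 0] with σi hi
    obtain ⟨hmem, hfix, -⟩ := hb σi hi
    rw [mul_div_right_comm] at hfix
    exact ⟨by linarith [hmem.2], by linarith [hmem.1],
      mul_one_sub_eq_two_mul_sin_sq_of_fixedPoint hmem hfix⟩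
  have hc : Tendsto c atTop (𝓝 0) :=
    tendsto_const_nhds.div_atTop
      (tendsto_atTop_add_const_left _ _ (tendsto_pow_atTop two_ne_zero))
  have hu : Tendsto (fun σi => 1 - b σi) atTop (𝓝 0) :=
    tendsto_of_tendsto_of_tendsto_of_le_of_le' tendsto_const_nhds
      (by simpa using hc.const_mul 2) (hgap.mono fun _ h => h.1.le)
      (hgap.mono fun _ h => le_two_mul_of_mul_eq_two_mul_sin_sq h.1 (by linarith) h.2.2)
  have hratio := tendsto_div_of_mul_eq_two_mul_sin_sq hu (hgap.mono fun _ h => h.1.ne')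
    (hgap.mono fun _ h => h.2.2)
  have hlim := ((hc.const_sub 1).const_mul (σr ^ 2)).mul hratio
  rw [show σr ^ 2 * (1 - 0) * (8 / π ^ 2) = 8 * σr ^ 2 / π ^ 2 by ring] at hlim
  refine hlim.congr' (Eventually.of_forall fun σi => ?_)
  simp only [hc_def]
  field_simp
  ring
end

section
/- With the notation of the ReLU kernel map, the derivative of h₂ on (0,a) is h₂'(x) = (σᵣ²/(2π))·arccos(−(σᵣ²x + σᵢ²)/(σᵣ²a + σᵢ²)); in particular h₂'(a) = σᵣ²/2, which is < 1 when σᵣ < √2. -/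
/-!
With `c = σᵣ² a + σᵢ²`, `h₂ x = F (σᵣ² x + σᵢ²) / (2π)` where `F u = u arccos (-u/c) + √(c² - u²)`
is a primitive of `arccos (-u/c)` on `(-c, c)`; the chain rule gives `h₂'`. At `x = a` the
argument reaches the endpoint `c`, where `F` is only one-sidedly differentiable, but `F` is
continuous and `F' u → arccos (-1) = π`, so the left derivative is `π` and `h₂'(a) = σᵣ²/2`.
-/

open Real Set Filter Topology

noncomputable section

def arccosPrimitive (c u : ℝ) : ℝ := u * arccos (-(u / c)) + √(c ^ 2 - u ^ 2)

theorem continuous_arccosPrimitive (c : ℝ) : Continuous (arccosPrimitive c) := by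
  unfold arccosPrimitive
  fun_prop

theorem hasDerivAt_arccosPrimitive {c u : ℝ} (hu : u ∈ Ioo (-c) c) :
    HasDerivAt (arccosPrimitive c) (arccos (-(u / c))) u := by
  obtain ⟨hlo, hhi⟩ := hu
  have hc : 0 < c := by linarith
  have hrad : 0 < c ^ 2 - u ^ 2 := by nlinarith
  have hne_neg_one : -(u / c) ≠ -1 := by
    rw [ne_eq, neg_inj, div_eq_one_iff_eq hc.ne']; exact hhi.ne
  have hne_one : -(u / c) ≠ 1 := by
    rw [ne_eq, neg_eq_iff_eq_neg, div_eq_iff hc.ne']; linarith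
  have hquot : HasDerivAt (fun u => -(u / c)) (-(1 / c)) u :=
    ((hasDerivAt_id u).div_const c).neg
  have harccos := (hasDerivAt_arccos hne_neg_one hne_one).comp u hquot
  have hsqrt : HasDerivAt (fun u => √(c ^ 2 - u ^ 2)) (-(2 * u) / (2 * √(c ^ 2 - u ^ 2))) u := by
    simpa using ((hasDerivAt_pow 2 u).const_sub (c ^ 2)).sqrt hrad.ne'
  -- the term `u · arccos'` cancels the derivative of the square root
  have hsqrt_div : √(1 - (-(u / c)) ^ 2) = √(c ^ 2 - u ^ 2) / c := by
    rw [neg_sq, div_pow, one_sub_div (pow_pos hc 2).ne', sqrt_div' _ (pow_nonneg hc.le 2),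
      sqrt_sq hc.le]
  have hsqrt_pos : 0 < √(c ^ 2 - u ^ 2) := sqrt_pos.2 hrad
  refine (((hasDerivAt_id u).mul harccos).add hsqrt).congr_deriv ?_
  rw [hsqrt_div, Function.comp_apply, id]
  field_simp
  ring

theorem hasDerivWithinAt_arccosPrimitive_Iic {c : ℝ} (hc : 0 < c) :
    HasDerivWithinAt (arccosPrimitive c) π (Iic c) c := by
  have hmem : Ioo (-c) c ∈ 𝓝[<] c := Ioo_mem_nhdsLT (by linarith)
  have hlim : Tendsto (fun u => arccos (-(u / c))) (𝓝[<] c) (𝓝 π) := by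
    have hcont : Continuous fun u => arccos (-(u / c)) := by fun_prop
    simpa [div_self hc.ne'] using (hcont.tendsto c).mono_left nhdsWithin_le_nhds
  refine hasDerivWithinAt_Iic_of_tendsto_deriv
    (fun u hu => (hasDerivAt_arccosPrimitive hu).differentiableAt.differentiableWithinAt)
    (continuous_arccosPrimitive c).continuousWithinAt hmem ?_
  refine hlim.congr' ?_
  filter_upwards [hmem] with u hu
  exact (hasDerivAt_arccosPrimitive hu).deriv.symm

end

theorem stmt_14 (σr σi : ℝ) (hr : 0 < σr) (hr2 : σr ^ 2 < 2) (hi : 0 < σi)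
    (a : ℝ) (ha : a = σi ^ 2 / (2 - σr ^ 2))
    (h₂ : ℝ → ℝ)
    (hdef : ∀ x, h₂ x = 1 / (2 * π) *
      ((σr ^ 2 * x + σi ^ 2) *
          Real.arccos (-((σr ^ 2 * x + σi ^ 2) / (σr ^ 2 * a + σi ^ 2))) +
        Real.sqrt ((σr ^ 2 * a + σi ^ 2) ^ 2 - (σr ^ 2 * x + σi ^ 2) ^ 2))) :
    (∀ x ∈ Set.Ioo (0 : ℝ) a,
      HasDerivAt h₂
        (σr ^ 2 / (2 * π) *
          Real.arccos (-((σr ^ 2 * x + σi ^ 2) / (σr ^ 2 * a + σi ^ 2)))) x) ∧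
      derivWithin h₂ (Set.Icc (0 : ℝ) a) a = σr ^ 2 / 2 ∧ σr ^ 2 / 2 < 1 := by
  set c := σr ^ 2 * a + σi ^ 2
  have hh₂ : h₂ = fun x => 1 / (2 * π) * arccosPrimitive c (σr ^ 2 * x + σi ^ 2) := funext hdef
  have hr_sq : 0 < σr ^ 2 := by positivity
  have ha0 : 0 < a := by rw [ha]; exact div_pos (by positivity) (by linarith)
  have hinner (x : ℝ) : HasDerivAt (fun x => σr ^ 2 * x + σi ^ 2) (σr ^ 2) x := by
    simpa using ((hasDerivAt_id x).const_mul (σr ^ 2)).add_const (σi ^ 2)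
  subst hh₂
  refine ⟨fun x ⟨hx0, hxa⟩ => ?_, ?_, by linarith⟩
  · have hu : σr ^ 2 * x + σi ^ 2 ∈ Ioo (-c) c := ⟨by nlinarith, by nlinarith⟩
    have hderiv := ((hasDerivAt_arccosPrimitive hu).comp x (hinner x)).const_mul (1 / (2 * π))
    exact hderiv.congr_deriv (by ring)
  · have hmaps : MapsTo (fun x => σr ^ 2 * x + σi ^ 2) (Icc 0 a) (Iic c) :=
      fun x hx => by simp only [mem_Iic, c]; nlinarith [hx.2]
    have hderiv := ((hasDerivWithinAt_arccosPrimitive_Iic (c := c) (by positivity)).comp a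
      (hinner a).hasDerivWithinAt hmaps).const_mul (1 / (2 * π))
    refine (hderiv.derivWithin (uniqueDiffOn_Icc ha0 a (right_mem_Icc.2 ha0.le))).trans ?_
    field_simp
end

section
/- With the ReLU kernel map h₂ as above (assuming σᵢ > 0), h₂ is strictly convex on [0,a): its second derivative is h₂''(x) = σᵣ⁴ / (2π√((σᵣ²a + σᵢ²)² − (σᵣ²x + σᵢ²)²)) > 0 for x ∈ [0,a). -/
/-!
With `u = σᵣ² x + σᵢ²` and `c = σᵣ² a + σᵢ²`, `h₂` is `u ↦ u · arccos (-u/c) + √(c² - u²)`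
composed with an affine map. The derivative of that kernel in `u` is `arccos (-u/c)`, the two
`√(c² - u²)` contributions cancelling, and the derivative of `arccos (-u/c)` is `1 / √(c² - u²)`.
Hence `h₂'' = σᵣ⁴ / (2π √(c² - u²))`, which is positive on `[0, a)` because there `0 ≤ u < c`.
-/

open Real Set

noncomputable def reluKernel (c u : ℝ) : ℝ :=
  u * arccos (-(u / c)) + √(c ^ 2 - u ^ 2)

lemma sqrt_sq_sub_sq_pos {c u : ℝ} (hu : |u| < c) : 0 < √(c ^ 2 - u ^ 2) := by
  apply Real.sqrt_pos.2
  nlinarith [abs_nonneg u, sq_abs u]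

lemma hasDerivAt_arccos_neg_div {c u : ℝ} (hu : |u| < c) :
    HasDerivAt (fun v => arccos (-(v / c))) (1 / √(c ^ 2 - u ^ 2)) u := by
  have hc : 0 < c := (abs_nonneg u).trans_lt hu
  obtain ⟨hlo, hhi⟩ := abs_lt.1 hu
  have hne₁ : -(u / c) ≠ -1 := by
    rw [ne_eq, neg_inj, div_eq_one_iff_eq hc.ne']; exact hhi.ne
  have hne₂ : -(u / c) ≠ 1 := by
    rw [ne_eq, neg_eq_iff_eq_neg, div_eq_iff hc.ne']; linarith
  have hsqrt : √(1 - (-(u / c)) ^ 2) = √(c ^ 2 - u ^ 2) / c := by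
    rw [show 1 - (-(u / c)) ^ 2 = (c ^ 2 - u ^ 2) / c ^ 2 by field_simp,
      Real.sqrt_div' _ (sq_nonneg c), Real.sqrt_sq hc.le]
  have hlin : HasDerivAt (fun v => -(v / c)) (-(1 / c)) u := ((hasDerivAt_id' u).div_const c).neg
  refine ((hasDerivAt_arccos hne₁ hne₂).comp u hlin).congr_deriv ?_
  rw [hsqrt]
  have := (sqrt_sq_sub_sq_pos hu).ne'
  field_simp

lemma hasDerivAt_reluKernel {c u : ℝ} (hu : |u| < c) :
    HasDerivAt (reluKernel c) (arccos (-(u / c))) u := by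
  have hs := sqrt_sq_sub_sq_pos hu
  have hroot := ((hasDerivAt_pow 2 u).const_sub (c ^ 2)).sqrt (Real.sqrt_pos.1 hs).ne'
  refine (((hasDerivAt_id' u).mul (hasDerivAt_arccos_neg_div hu)).add hroot).congr_deriv ?_
  have := hs.ne'
  simp only [one_mul, Nat.cast_ofNat, Nat.add_one_sub_one, pow_one]
  field_simp
  ring

lemma continuous_reluKernel (c : ℝ) : Continuous (reluKernel c) := by
  unfold reluKernel; fun_prop

lemma deriv_deriv_reluKernel_affine {k p q c x : ℝ} (hx : |p * x + q| < c) :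
    deriv (deriv fun y => k * reluKernel c (p * y + q)) x =
      k * p ^ 2 / √(c ^ 2 - (p * x + q) ^ 2) := by
  have haff : ∀ y, HasDerivAt (fun y => p * y + q) p y := fun y => by
    simpa using ((hasDerivAt_id y).const_mul p).add_const q
  have hdom : IsOpen {y | |p * y + q| < c} := isOpen_lt (by fun_prop) continuous_const
  have hfirst : deriv (fun y => k * reluKernel c (p * y + q)) =ᶠ[nhds x]
      fun y => k * p * arccos (-((p * y + q) / c)) := by
    filter_upwards [hdom.mem_nhds hx] with y (hy : |p * y + q| < c)
    have hcomp := (hasDerivAt_reluKernel hy).comp y (haff y)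
    have h : HasDerivAt (fun y => k * reluKernel c (p * y + q))
        (k * (arccos (-((p * y + q) / c)) * p)) y :=
      hcomp.const_mul k
    rw [h.deriv]
    ring
  rw [hfirst.deriv_eq]
  have h : HasDerivAt (fun y => k * p * arccos (-((p * y + q) / c)))
      (k * p * (1 / √(c ^ 2 - (p * x + q) ^ 2) * p)) x :=
    ((hasDerivAt_arccos_neg_div hx).comp x (haff x)).const_mul (k * p)
  rw [h.deriv]
  ring

theorem stmt_15_general (σr σi : ℝ) (hr : 0 < σr)
    (a : ℝ)
    (h₂ : ℝ → ℝ)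
    (hdef : ∀ x, h₂ x = 1 / (2 * π) *
      ((σr ^ 2 * x + σi ^ 2) *
          Real.arccos (-((σr ^ 2 * x + σi ^ 2) / (σr ^ 2 * a + σi ^ 2))) +
        Real.sqrt ((σr ^ 2 * a + σi ^ 2) ^ 2 - (σr ^ 2 * x + σi ^ 2) ^ 2))) :
    (∀ x ∈ Set.Ico (0 : ℝ) a,
      deriv (deriv h₂) x =
        σr ^ 4 /
          (2 * π * Real.sqrt ((σr ^ 2 * a + σi ^ 2) ^ 2 - (σr ^ 2 * x + σi ^ 2) ^ 2)) ∧
      0 < deriv (deriv h₂) x) ∧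
    StrictConvexOn ℝ (Set.Ico (0 : ℝ) a) h₂ := by
  have hfun : h₂ = fun x => 1 / (2 * π) * reluKernel (σr ^ 2 * a + σi ^ 2) (σr ^ 2 * x + σi ^ 2) :=
    funext hdef
  have hdom : ∀ x ∈ Ico 0 a, |σr ^ 2 * x + σi ^ 2| < σr ^ 2 * a + σi ^ 2 := by
    rintro x ⟨hx0, hxa⟩
    have : σr ^ 2 * x < σr ^ 2 * a := by gcongr
    rw [abs_of_nonneg (by positivity)]; linarith
  have hd2 : ∀ x ∈ Ico 0 a, deriv (deriv h₂) x = σr ^ 4 /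
      (2 * π * √((σr ^ 2 * a + σi ^ 2) ^ 2 - (σr ^ 2 * x + σi ^ 2) ^ 2)) := by
    intro x hx
    rw [hfun, deriv_deriv_reluKernel_affine (hdom x hx)]
    field_simp
  have hpos : ∀ x ∈ Ico 0 a, 0 < deriv (deriv h₂) x := fun x hx => by
    have := sqrt_sq_sub_sq_pos (hdom x hx)
    rw [hd2 x hx]; positivity
  refine ⟨fun x hx => ⟨hd2 x hx, hpos x hx⟩, strictConvexOn_of_deriv2_pos' (convex_Ico 0 a) ?_ hpos⟩
  rw [hfun]
  exact (continuous_const.mul ((continuous_reluKernel _).comp (by fun_prop))).continuousOn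

theorem stmt_15 (σr σi : ℝ) (hr : 0 < σr) (hr2 : σr ^ 2 < 2) (hi : 0 < σi)
    (a : ℝ) (ha : a = σi ^ 2 / (2 - σr ^ 2))
    (h₂ : ℝ → ℝ)
    (hdef : ∀ x, h₂ x = 1 / (2 * π) *
      ((σr ^ 2 * x + σi ^ 2) *
          Real.arccos (-((σr ^ 2 * x + σi ^ 2) / (σr ^ 2 * a + σi ^ 2))) +
        Real.sqrt ((σr ^ 2 * a + σi ^ 2) ^ 2 - (σr ^ 2 * x + σi ^ 2) ^ 2))) :
    (∀ x ∈ Set.Ico (0 : ℝ) a,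
      deriv (deriv h₂) x =
        σr ^ 4 /
          (2 * π * Real.sqrt ((σr ^ 2 * a + σi ^ 2) ^ 2 - (σr ^ 2 * x + σi ^ 2) ^ 2)) ∧
      0 < deriv (deriv h₂) x) ∧
    StrictConvexOn ℝ (Set.Ico (0 : ℝ) a) h₂ :=
  stmt_15_general σr σi hr a h₂ hdef
end

section
/- For 0 < σᵣ < √2 and σᵢ > 0, the sequence g₀ = 0, g_{t+1} = h₂(g_t), where h₂ is the ReLU off-diagonal kernel map with equilibrium a = σᵢ²/(2−σᵣ²), is increasing and converges to a. Consequently the stability metric L_t = 2(a − g_t) converges to 0, i.e., the ReLU recurrent kernel is stable whenever σᵣ < √2. -/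
open Real Set Filter Topology

/-! With `u = σr² x + σi²`, the equilibrium identity `σr² a + σi² = 2a` and `θ = arccos (u / 2a)`,
one has `h₂ x = (a / π) (cos θ (π - θ) + sin θ)`. The inequalities `θ cos θ ≤ sin θ ≤ θ` give
`u / 2 ≤ h₂ x ≤ a` on `[0, a]`, and `u / 2 - x = (2 - σr²)(a - x) / 2`, so `x ≤ h₂ x ≤ a` there,
with `x < h₂ x` for `x < a`. The orbit of `0` is therefore
increasing and bounded by `a`; its limit is a fixed point of the continuous map `h₂`, hence `a`. -/

theorem Real.mul_cos_le_sin {θ : ℝ} (h0 : 0 ≤ θ) (hπ : θ ≤ π) : θ * cos θ ≤ sin θ := by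
  rcases lt_or_ge θ (π / 2) with h | h
  · rcases h0.eq_or_lt with rfl | h0
    · simp
    · have hcos : 0 < cos θ := cos_pos_of_mem_Ioo ⟨by linarith [pi_pos], h⟩
      have htan := lt_tan h0 h
      rw [tan_eq_sin_div_cos, lt_div_iff₀ hcos] at htan
      exact htan.le
  · have hcos : cos θ ≤ 0 := cos_nonpos_of_pi_div_two_le_of_le h (by linarith)
    have hsin : 0 ≤ sin θ := sin_nonneg_of_nonneg_of_le_pi h0 hπ
    nlinarith

-- With `θ = arccos s` the middle term is `cos θ (π - θ) + sin θ`.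
theorem Real.mul_arccos_neg_add_sqrt_mem_Icc {s : ℝ} (h₁ : -1 ≤ s) (h₂ : s ≤ 1) :
    s * arccos (-s) + √(1 - s ^ 2) ∈ Icc (π * s) π := by
  set θ := arccos s
  have hθ0 : 0 ≤ θ := arccos_nonneg s
  have hθπ : θ ≤ π := arccos_le_pi s
  have hcos : cos θ = s := cos_arccos h₁ h₂
  have hlow : θ * s ≤ sin θ := hcos ▸ mul_cos_le_sin hθ0 hθπ
  have hup : sin θ ≤ θ := sin_le hθ0
  rw [arccos_neg, ← sin_arccos]
  constructor <;> nlinarith [mul_nonneg (sub_nonneg.2 hθπ) (sub_nonneg.2 h₂)]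

theorem Real.mul_arccos_neg_div_add_sqrt_mem_Icc {u c : ℝ} (hu : |u| ≤ c) :
    u * arccos (-(u / c)) + √(c ^ 2 - u ^ 2) ∈ Icc (π * u) (π * c) := by
  rcases (abs_nonneg u |>.trans hu).eq_or_lt with rfl | hc
  · obtain rfl : u = 0 := abs_nonpos_iff.1 hu
    simp
  obtain ⟨h₁, h₂⟩ := abs_le.1 hu
  set s := u / c
  have hus : u = c * s := (mul_div_cancel₀ u hc.ne').symm
  have hsqrt : √(c ^ 2 - u ^ 2) = c * √(1 - s ^ 2) := by
    rw [hus, ← sqrt_sq hc.le, ← sqrt_mul (sq_nonneg c), sqrt_sq hc.le]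
    ring_nf
  obtain ⟨hlow, hup⟩ := mul_arccos_neg_add_sqrt_mem_Icc (s := s)
    (by rw [le_div_iff₀ hc]; linarith) (by rw [div_le_iff₀ hc]; linarith)
  rw [hsqrt, hus]
  constructor <;> nlinarith

noncomputable def reluKernelMap (σr σi a x : ℝ) : ℝ :=
  1 / (2 * π) *
    ((σr ^ 2 * x + σi ^ 2) * arccos (-((σr ^ 2 * x + σi ^ 2) / (σr ^ 2 * a + σi ^ 2))) +
      √((σr ^ 2 * a + σi ^ 2) ^ 2 - (σr ^ 2 * x + σi ^ 2) ^ 2))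

theorem continuous_reluKernelMap (σr σi a : ℝ) : Continuous (reluKernelMap σr σi a) := by
  unfold reluKernelMap
  fun_prop

theorem reluKernelMap_mem_Icc {σr σi a x : ℝ} (ha : (2 - σr ^ 2) * a = σi ^ 2)
    (hx : x ∈ Icc 0 a) :
    reluKernelMap σr σi a x ∈ Icc (x + (2 - σr ^ 2) * (a - x) / 2) a := by
  have hc : σr ^ 2 * a + σi ^ 2 = 2 * a := by linear_combination -ha
  have hu : |σr ^ 2 * x + σi ^ 2| ≤ σr ^ 2 * a + σi ^ 2 := by
    rw [abs_of_nonneg (add_nonneg (mul_nonneg (sq_nonneg σr) hx.1) (sq_nonneg σi))]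
    nlinarith [hx.2, sq_nonneg σr]
  obtain ⟨hlow, hup⟩ := mul_arccos_neg_div_add_sqrt_mem_Icc hu
  have hgap : x + (2 - σr ^ 2) * (a - x) / 2 = (σr ^ 2 * x + σi ^ 2) / 2 := by
    linear_combination ha / 2
  have hπ : 0 < 2 * π := by positivity
  unfold reluKernelMap
  rw [hc] at hlow hup ⊢
  rw [hgap, one_div_mul_eq_div]
  constructor
  · rw [le_div_iff₀ hπ]; linarith
  · rw [div_le_iff₀ hπ]; linarith

theorem monotone_tendsto_of_lt_map {f : ℝ → ℝ} {a : ℝ} {g : ℕ → ℝ}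
    (hgs : ∀ t, g (t + 1) = f (g t)) (h0 : g 0 ≤ a) (hf : ContinuousOn f (Icc (g 0) a))
    (hmaps : ∀ x ∈ Icc (g 0) a, f x ∈ Icc x a) (hlt : ∀ x ∈ Ico (g 0) a, x < f x) :
    Monotone g ∧ Tendsto g atTop (𝓝 a) := by
  have hmem : ∀ t, g t ∈ Icc (g 0) a := by
    intro t
    induction t with
    | zero => exact ⟨le_rfl, h0⟩
    | succ t ih =>
      rw [hgs]
      exact ⟨ih.1.trans (hmaps _ ih).1, (hmaps _ ih).2⟩
  have hmono : Monotone g := monotone_nat_of_le_succ fun t => hgs t ▸ (hmaps _ (hmem t)).1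
  have hbdd : BddAbove (range g) := ⟨a, by rintro _ ⟨t, rfl⟩; exact (hmem t).2⟩
  set L := ⨆ t, g t
  have hL : Tendsto g atTop (𝓝 L) := tendsto_atTop_ciSup hmono hbdd
  have hLmem : L ∈ Icc (g 0) a := ⟨le_ciSup hbdd 0, ciSup_le fun t => (hmem t).2⟩
  have hfix : f L = L := by
    have hfg : Tendsto (f ∘ g) atTop (𝓝 (f L)) :=
      (hf L hLmem).tendsto.comp (tendsto_nhdsWithin_iff.2 ⟨hL, .of_forall hmem⟩)
    refine tendsto_nhds_unique hfg ?_
    simpa only [Function.comp_def, ← hgs] using (tendsto_add_atTop_iff_nat 1).2 hL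
  have hLa : L = a := by
    by_contra hne
    exact (hlt L ⟨hLmem.1, lt_of_le_of_ne hLmem.2 hne⟩).ne' hfix
  exact ⟨hmono, hLa ▸ hL⟩

theorem stmt_17_general (σr σi : ℝ) (hr : 0 < σr) (hr2 : σr < Real.sqrt 2)
    (a : ℝ) (ha : a = σi ^ 2 / (2 - σr ^ 2))
    (h₂ : ℝ → ℝ)
    (hdef : ∀ x, h₂ x = 1 / (2 * π) *
      ((σr ^ 2 * x + σi ^ 2) *
          Real.arccos (-((σr ^ 2 * x + σi ^ 2) / (σr ^ 2 * a + σi ^ 2))) +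
        Real.sqrt ((σr ^ 2 * a + σi ^ 2) ^ 2 - (σr ^ 2 * x + σi ^ 2) ^ 2)))
    (g : ℕ → ℝ) (hg0 : g 0 = 0) (hgs : ∀ t, g (t + 1) = h₂ (g t)) :
    Monotone g ∧ Filter.Tendsto g Filter.atTop (nhds a) ∧
      Filter.Tendsto (fun t => 2 * (a - g t)) Filter.atTop (nhds 0) := by
  obtain rfl : h₂ = reluKernelMap σr σi a := funext hdef
  have hσ : 0 < 2 - σr ^ 2 := sub_pos.2 ((lt_sqrt hr.le).1 hr2)
  have hequil : (2 - σr ^ 2) * a = σi ^ 2 := by rw [ha]; field_simp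
  have ha0 : 0 ≤ a := ha ▸ div_nonneg (sq_nonneg σi) hσ.le
  have hbounds (x : ℝ) (hx : x ∈ Icc (g 0) a) := reluKernelMap_mem_Icc hequil (hg0 ▸ hx)
  obtain ⟨hmono, hlim⟩ := monotone_tendsto_of_lt_map hgs (hg0 ▸ ha0)
    (continuous_reluKernelMap σr σi a).continuousOn
    (fun x hx => ⟨le_trans (by nlinarith [hx.2]) (hbounds x hx).1, (hbounds x hx).2⟩)
    (fun x hx => lt_of_lt_of_le (by nlinarith [hx.2]) (hbounds x (Ico_subset_Icc_self hx)).1)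
  refine ⟨hmono, hlim, ?_⟩
  simpa using ((tendsto_const_nhds (x := a)).sub hlim).const_mul 2

theorem stmt_17 (σr σi : ℝ) (hr : 0 < σr) (hr2 : σr < Real.sqrt 2) (hi : 0 < σi)
    (a : ℝ) (ha : a = σi ^ 2 / (2 - σr ^ 2))
    (h₂ : ℝ → ℝ)
    (hdef : ∀ x, h₂ x = 1 / (2 * π) *
      ((σr ^ 2 * x + σi ^ 2) *
          Real.arccos (-((σr ^ 2 * x + σi ^ 2) / (σr ^ 2 * a + σi ^ 2))) +
        Real.sqrt ((σr ^ 2 * a + σi ^ 2) ^ 2 - (σr ^ 2 * x + σi ^ 2) ^ 2)))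
    (g : ℕ → ℝ) (hg0 : g 0 = 0) (hgs : ∀ t, g (t + 1) = h₂ (g t)) :
    Monotone g ∧ Filter.Tendsto g Filter.atTop (nhds a) ∧
      Filter.Tendsto (fun t => 2 * (a - g t)) Filter.atTop (nhds 0) :=
  stmt_17_general σr σi hr hr2 a ha h₂ hdef g hg0 hgs
end
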